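/- arXiv:2010.05521 — 3 statements merged into one kernel-verified Lean document; each statement's English description precedes it below -/
import Mathlib

section
/- The number of vertices of Hamming weight w in the Fibonacci-run graph R_n (equivalently, the number of run-constrained binary strings of length n+2 containing exactly w ones) is the binomial coefficient C(n-w+1, w), for 0 ≤ w ≤ ⌈n/2⌉. -/
/-!
Every run-constrained string factors uniquely into letters `1^i 0^(i+1)` with `i ≥ 0`, so the
run-constrained strings of length `m` and weight `k` correspond to lists `(i₁, …, i_L)` with
`L + 2k = m` and `i₁ + ⋯ + i_L = k`, i.e. to weak compositions of `k` into `L = m - 2k` parts.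
Stars and bars counts these as `C(L + k - 1, k) = C(m - k - 1, k)`. Finally, every run-constrained
string of length at least two ends in `00`, so `w ↦ w00` identifies the vertices of `R_n` with
the run-constrained strings of length `n + 2`.
-/

/-- Run-constrained binary strings (bits encoded as `1 = true`, `0 = false`):
the strings in which every maximal run of 1s is immediately followed by a
strictly longer run of 0s; equivalently (as stated in the paper), the
concatenations of zero or more words from the infinite alphabet
`R = {0} ∪ {1^i 0^{i+1} : i ≥ 1}`. -/
inductive RunConstrained : List Bool → Prop where
  | nil : RunConstrained []
  | zero {w : List Bool} : RunConstrained w → RunConstrained (false :: w)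
  | block {w : List Bool} (i : ℕ) (hi : 1 ≤ i) : RunConstrained w →
      RunConstrained (List.replicate i true ++ List.replicate (i + 1) false ++ w)

/-- Vertices of the Fibonacci-run graph `R_n`: binary strings `w` of length `n`
such that `w00` is a run-constrained string of length `n+2`. -/
def RunVertex (n : ℕ) :=
  {w : Fin n → Bool // RunConstrained (List.ofFn w ++ [false, false])}

/-- The Fibonacci-run graph `R_n`: two vertices are adjacent iff their
Hamming distance is 1. -/
def runGraph (n : ℕ) : SimpleGraph (RunVertex n) where
  Adj u v := hammingDist u.1 v.1 = 1
  symm := ⟨by intro u v h; rwa [hammingDist_comm]⟩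
  loopless := ⟨by intro u h; simp [hammingDist_self] at h⟩

theorem natCard_list_length_sum_eq_choose (L k : ℕ) :
    Nat.card {l : List ℕ // l.length = L ∧ l.sum = k} = (L + k - 1).choose k := by
  have ofFn_bijective : Function.Bijective fun P : {P : Fin L → ℕ // ∑ i, P i = k} =>
      (⟨List.ofFn P.1, List.length_ofFn, List.sum_ofFn.trans P.2⟩ :
        {l : List ℕ // l.length = L ∧ l.sum = k}) := by
    refine ⟨fun P Q h => Subtype.ext (List.ofFn_injective (congrArg Subtype.val h)), ?_⟩
    rintro ⟨l, rfl, rfl⟩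
    exact ⟨⟨fun i => l[i], List.sum_ofFn.symm.trans (congrArg _ List.ofFn_getElem)⟩,
      Subtype.ext List.ofFn_getElem⟩
  rw [← Nat.card_eq_of_bijective _ ofFn_bijective,
    ← Nat.card_congr (Sym.equivNatSumOfFintype (Fin L) k), Sym.natCard_sym_eq_choose,
    Nat.card_fin]

/-- For `i = 0` this is the letter `0`, so the `runLetter i` are exactly the letters of `R`. -/
def runLetter (i : ℕ) : List Bool :=
  List.replicate i true ++ List.replicate (i + 1) false

def runWord (l : List ℕ) : List Bool :=
  l.flatMap runLetter

@[simp] lemma runWord_nil : runWord [] = [] := rfl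

@[simp] lemma runWord_cons (i : ℕ) (l : List ℕ) : runWord (i :: l) = runLetter i ++ runWord l :=
  List.flatMap_cons

lemma length_runWord (l : List ℕ) : (runWord l).length = l.length + 2 * l.sum := by
  induction l with
  | nil => rfl
  | cons i l ih => simp [runLetter, ih]; ring

lemma count_true_runWord (l : List ℕ) : (runWord l).count true = l.sum := by
  induction l with
  | nil => rfl
  | cons i l ih => simp [runLetter, ih, List.count_replicate]

lemma runConstrained_runWord (l : List ℕ) : RunConstrained (runWord l) := by
  induction l with
  | nil => exact .nil
  | cons i l ih =>
    rcases Nat.eq_zero_or_pos i with rfl | hi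
    · exact .zero ih
    · exact .block i hi ih

lemma takeWhile_runLetter_append (i : ℕ) (s : List Bool) :
    (runLetter i ++ s).takeWhile id = List.replicate i true := by
  rw [runLetter, List.append_assoc, List.takeWhile_append_of_pos (by simp)]
  simp [List.replicate_succ]

lemma runLetter_append_inj {i j : ℕ} {s t : List Bool}
    (h : runLetter i ++ s = runLetter j ++ t) : i = j ∧ s = t := by
  have hij : i = j := by
    simpa [takeWhile_runLetter_append] using congrArg (List.length ∘ List.takeWhile id) h
  subst hij
  exact ⟨rfl, List.append_cancel_left h⟩

lemma runWord_injective : Function.Injective runWord := by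
  intro l₁
  induction l₁ with
  | nil =>
    rintro (_ | ⟨j, l₂⟩) h
    · rfl
    · simp [runLetter] at h
  | cons i l₁ ih =>
    rintro (_ | ⟨j, l₂⟩) h
    · simp [runLetter] at h
    · rw [runWord_cons, runWord_cons] at h
      obtain ⟨rfl, hw⟩ := runLetter_append_inj h
      rw [ih hw]

namespace RunConstrained

lemma exists_runWord_eq {s : List Bool} (h : RunConstrained s) : ∃ l, runWord l = s := by
  induction h with
  | nil => exact ⟨[], rfl⟩
  | zero _ ih =>
    obtain ⟨l, rfl⟩ := ih
    exact ⟨0 :: l, rfl⟩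
  | block i _ _ ih =>
    obtain ⟨l, rfl⟩ := ih
    exact ⟨i :: l, by simp [runLetter]⟩

lemma eq_nil_or_eq_false_or_suffix {s : List Bool} (h : RunConstrained s) :
    s = [] ∨ s = [false] ∨ [false, false] <:+ s := by
  have suffix_replicate (A : List Bool) (m : ℕ) :
      [false, false] <:+ A ++ List.replicate (m + 2) false :=
    List.suffix_append_of_suffix ⟨List.replicate m false, (List.replicate_add m 2 false).symm⟩
  induction h with
  | nil => exact .inl rfl
  | zero _ ih =>
    rcases ih with rfl | rfl | hs
    · exact .inr (.inl rfl)
    · exact .inr (.inr List.suffix_rfl)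
    · exact .inr (.inr (hs.trans (List.suffix_cons _ _)))
  | block i hi _ ih =>
    refine .inr (.inr ?_)
    rcases ih with rfl | rfl | hs
    · rw [List.append_nil, show i + 1 = i - 1 + 2 by omega]
      exact suffix_replicate _ _
    · rw [List.append_assoc, ← List.replicate_succ']
      exact suffix_replicate _ _
    · exact hs.trans (List.suffix_append _ _)

end RunConstrained

theorem natCard_runConstrained_eq_natCard_list (m k : ℕ) :
    Nat.card {s : List Bool // RunConstrained s ∧ s.length = m ∧ s.count true = k} =
      Nat.card {l : List ℕ // l.length + 2 * l.sum = m ∧ l.sum = k} := by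
  symm
  refine Nat.card_eq_of_bijective (fun l => ⟨runWord l.1, runConstrained_runWord _,
    (length_runWord _).trans l.2.1, (count_true_runWord _).trans l.2.2⟩) ⟨?_, ?_⟩
  · exact fun l₁ l₂ h => Subtype.ext (runWord_injective (congrArg Subtype.val h))
  · rintro ⟨s, hs, rfl, rfl⟩
    obtain ⟨l, rfl⟩ := hs.exists_runWord_eq
    exact ⟨⟨l, (length_runWord l).symm, (count_true_runWord l).symm⟩, rfl⟩

theorem natCard_runConstrained_length_count_eq_choose (m k : ℕ) (h : 2 * k ≤ m) :
    Nat.card {s : List Bool // RunConstrained s ∧ s.length = m ∧ s.count true = k} =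
      (m - k - 1).choose k := by
  rw [natCard_runConstrained_eq_natCard_list,
    Nat.card_congr (Equiv.subtypeEquivRight fun l : List ℕ =>
      show l.length + 2 * l.sum = m ∧ l.sum = k ↔ l.length = m - 2 * k ∧ l.sum = k by omega),
    natCard_list_length_sum_eq_choose, show m - 2 * k + k - 1 = m - k - 1 by omega]

theorem natCard_runVertex_weight_eq_natCard_runConstrained (n k : ℕ) :
    Nat.card {w : Fin n → Bool //
        RunConstrained (List.ofFn w ++ [false, false]) ∧ (List.ofFn w).count true = k} =
      Nat.card {s : List Bool // RunConstrained s ∧ s.length = n + 2 ∧ s.count true = k} := by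
  refine Nat.card_eq_of_bijective (fun w => ⟨List.ofFn w.1 ++ [false, false], w.2.1,
    by simp, by simpa using w.2.2⟩) ⟨?_, ?_⟩
  · exact fun w₁ w₂ h => Subtype.ext
      (List.ofFn_injective (List.append_cancel_right (congrArg Subtype.val h)))
  · rintro ⟨s, hs, hlen, hcount⟩
    obtain rfl | rfl | ⟨t, rfl⟩ := hs.eq_nil_or_eq_false_or_suffix
    · simp at hlen
    · simp at hlen
    obtain rfl : t.length = n := by simpa using hlen
    replace hcount : t.count true = k := by simpa using hcount
    exact ⟨⟨fun i => t[i], by simp [List.ofFn_getElem, hs, hcount]⟩,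
      by simp [List.ofFn_getElem]⟩

/-- For `0 ≤ k ≤ ⌈n/2⌉`, the number of vertices of Hamming weight `k` in the
Fibonacci-run graph `R_n` (equivalently, the number of run-constrained binary
strings of length `n+2` with exactly `k` ones) is `C(n-k+1, k)`. -/
theorem card_runVertex_weight (n k : ℕ) (hk : k ≤ (n + 1) / 2) :
    Nat.card {w : Fin n → Bool //
        RunConstrained (List.ofFn w ++ [false, false]) ∧
          (List.ofFn w).count true = k} = (n - k + 1).choose k := by
  rw [natCard_runVertex_weight_eq_natCard_runConstrained,
    natCard_runConstrained_length_count_eq_choose _ _ (by omega)]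
  congr 1
  omega
end

section
/- The rank generating polynomial of the poset R_n is F(R_n, x) = Σ_{k=0}^{⌈n/2⌉} C(n-k+1, k) x^k, and the generating function Σ_{n≥1} F(R_n, x) t^n equals t(1+x+xt)/(1-t-xt^2) as a formal power series. -/
/-- The Hamming weight of a vertex: the number of 1s. -/
def wt {n : ℕ} (v : RunVertex n) : ℕ :=
  (Finset.univ.filter fun i => v.1 i = true).card

/-- The covering relation of the poset `R_n`: `v` covers `u` iff `v` is
obtained from `u` by flipping a single 0 to a 1. -/
def Covers {n : ℕ} (u v : RunVertex n) : Prop :=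
  ∃ i, u.1 i = false ∧ v.1 = Function.update u.1 i true

attribute [local instance] Classical.propDecidable

noncomputable instance (n : ℕ) : Fintype (RunVertex n) := Subtype.fintype _

/-! A word `w00` is run-constrained exactly when it factors, uniquely, as a product of blocks
`1^i 0^(i+1)` (`i ≥ 0`), so `R_n` is in weight-preserving bijection with the lists `l` of block
indices with `2 * l.sum + l.length = n + 2`, the weight being `l.sum`. Splitting off the first
block (`0`, or `1^(i+1) 0^(i+2)`, which shrinks to `1^i 0^(i+1)`) gives
`F(R_(n+2)) = F(R_(n+1)) + x F(R_n)`, with `F(R_0) = 1` and `F(R_1) = 1 + x`. The binomial sums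
`∑ C(n-k+1, k) xᵏ` obey the same recurrence by Pascal's rule, and the recurrence is the
generating-function identity read coefficientwise. -/

open Polynomial Finset

def block (i : ℕ) : List Bool := List.replicate i true ++ List.replicate (i + 1) false

lemma length_flatMap_block (l : List ℕ) : (l.flatMap block).length = 2 * l.sum + l.length := by
  induction l with
  | nil => rfl
  | cons i l ih => simp [block, ih]; ring

lemma count_true_flatMap_block (l : List ℕ) : (l.flatMap block).count true = l.sum := by
  simp [List.count_flatMap, block, List.count_replicate, Function.comp_def]

lemma runConstrained_iff_exists_flatMap_block {w : List Bool} :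
    RunConstrained w ↔ ∃ l : List ℕ, l.flatMap block = w := by
  constructor
  · intro h
    induction h with
    | nil => exact ⟨[], rfl⟩
    | zero _ ih => obtain ⟨l, rfl⟩ := ih; exact ⟨0 :: l, rfl⟩
    | block i _ _ ih => obtain ⟨l, rfl⟩ := ih; exact ⟨i :: l, by simp [block]⟩
  · rintro ⟨l, rfl⟩
    induction l with
    | nil => exact .nil
    | cons i l ih =>
      rcases i with _ | i
      · exact .zero ih
      · simpa [block] using RunConstrained.block (i + 1) (by omega) ih

lemma block_append_inj {a b : ℕ} {x y : List Bool} (h : block a ++ x = block b ++ y) :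
    a = b ∧ x = y := by
  suffices a = b by subst this; exact ⟨rfl, List.append_cancel_left h⟩
  have key : ∀ {a b x y}, a < b → block a ++ x ≠ block b ++ y := by
    intro a b x y hab h
    have := congrArg (·[a]?) h
    simp [block, List.getElem?_append, hab] at this
  rcases lt_trichotomy a b with hab | hab | hab
  · exact absurd h (key hab)
  · exact hab
  · exact absurd h.symm (key hab)

lemma flatMap_block_injective : Function.Injective (List.flatMap block) := by
  intro l₁ l₂ h
  induction l₁ generalizing l₂ with
  | nil =>
    cases l₂ with
    | nil => rfl
    | cons b t => simp [block] at h
  | cons a t ih =>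
    cases l₂ with
    | nil => simp [block] at h
    | cons b t₂ =>
      rw [List.flatMap_cons, List.flatMap_cons] at h
      obtain ⟨rfl, ht⟩ := block_append_inj h
      rw [ih ht]

lemma exists_flatMap_block_eq_append_false_false (l : List ℕ) (hl : 2 ≤ 2 * l.sum + l.length) :
    ∃ u, l.flatMap block = u ++ [false, false] := by
  have hfalse : ∀ j, block j = (List.replicate j true ++ List.replicate j false) ++ [false] := by
    intro j; simp [block, List.replicate_succ']
  obtain rfl | ⟨l, i, rfl⟩ := l.eq_nil_or_concat
  · simp at hl
  rcases i with _ | i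
  · obtain rfl | ⟨l, j, rfl⟩ := l.eq_nil_or_concat
    · simp at hl
    exact ⟨l.flatMap block ++ (List.replicate j true ++ List.replicate j false), by
      simp [hfalse]⟩
  · exact ⟨l.flatMap block ++ (List.replicate (i + 1) true ++ List.replicate i false), by
      simp [block, List.replicate_succ']⟩

def RunWord (m : ℕ) := {w : List Bool // w.length = m ∧ RunConstrained w}

def BlockList (m : ℕ) := {l : List ℕ // 2 * l.sum + l.length = m}

noncomputable def runVertexEquivRunWord (n : ℕ) : RunVertex n ≃ RunWord (n + 2) :=
  Equiv.ofBijective (fun v => ⟨List.ofFn v.1 ++ [false, false], by simp, v.2⟩) <| by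
    constructor
    · intro v v' h
      exact Subtype.ext (List.ofFn_injective (List.append_cancel_right (congrArg Subtype.val h)))
    · rintro ⟨w, hlen, hw⟩
      obtain ⟨l, rfl⟩ := runConstrained_iff_exists_flatMap_block.1 hw
      obtain ⟨u, hu⟩ := exists_flatMap_block_eq_append_false_false l
        (by rw [← length_flatMap_block, hlen]; omega)
      have hu_len : u.length = n := by simpa [hu] using hlen
      subst hu_len
      exact ⟨⟨fun i => u[i], by simpa [← hu] using hw⟩, Subtype.ext (by simp [hu])⟩

noncomputable def blockListEquivRunWord (m : ℕ) : BlockList m ≃ RunWord m :=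
  Equiv.ofBijective (fun l => ⟨l.1.flatMap block, by rw [length_flatMap_block, l.2],
      runConstrained_iff_exists_flatMap_block.2 ⟨l.1, rfl⟩⟩) <| by
    constructor
    · intro l l' h
      exact Subtype.ext (flatMap_block_injective (congrArg Subtype.val h))
    · rintro ⟨w, hlen, hw⟩
      obtain ⟨l, rfl⟩ := runConstrained_iff_exists_flatMap_block.1 hw
      exact ⟨⟨l, by rw [← length_flatMap_block, hlen]⟩, rfl⟩

noncomputable def runVertexEquivBlockList (n : ℕ) : RunVertex n ≃ BlockList (n + 2) :=
  (runVertexEquivRunWord n).trans (blockListEquivRunWord (n + 2)).symm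

lemma count_true_ofFn {n : ℕ} (f : Fin n → Bool) :
    (List.ofFn f).count true = (Finset.univ.filter fun i => f i = true).card := by
  rw [← Multiset.coe_count, ← Fin.univ_val_map, Multiset.count_map, Finset.card_def,
    Finset.filter_val]
  exact congrArg _ (Multiset.filter_congr fun i _ => eq_comm)

lemma sum_runVertexEquivBlockList {n : ℕ} (v : RunVertex n) :
    (runVertexEquivBlockList n v).1.sum = wt v := by
  set l := runVertexEquivBlockList n v
  have h : l.1.flatMap block = List.ofFn v.1 ++ [false, false] :=
    congrArg Subtype.val ((blockListEquivRunWord (n + 2)).apply_symm_apply _)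
  rw [← count_true_flatMap_block, h, List.count_append, count_true_ofFn]
  rfl

def blockListSuccEquiv (m : ℕ) :
    BlockList (m + 2) ⊕ BlockList (m + 1) ≃ BlockList (m + 3) where
  toFun
    | .inl ⟨l, h⟩ => ⟨0 :: l, by simp; omega⟩
    | .inr ⟨i :: l, h⟩ => ⟨(i + 1) :: l, by simp at h ⊢; omega⟩
    | .inr ⟨[], h⟩ => absurd h (by simp)
  invFun
    | ⟨0 :: l, h⟩ => .inl ⟨l, by simp at h; omega⟩
    | ⟨(i + 1) :: l, h⟩ => .inr ⟨i :: l, by simp at h ⊢; omega⟩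
    | ⟨[], h⟩ => absurd h (by simp)
  left_inv := by
    rintro (⟨_ | ⟨i, l⟩, h⟩ | ⟨_ | ⟨i, l⟩, h⟩) <;> first | rfl | simp at h
  right_inv := by rintro ⟨_ | ⟨_ | i, l⟩, h⟩ <;> first | rfl | simp at h

lemma sum_blockListSuccEquiv_inl {m : ℕ} (l : BlockList (m + 2)) :
    (blockListSuccEquiv m (.inl l)).1.sum = l.1.sum := by
  obtain ⟨l, h⟩ := l
  simp [blockListSuccEquiv]

lemma sum_blockListSuccEquiv_inr {m : ℕ} (l : BlockList (m + 1)) :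
    (blockListSuccEquiv m (.inr l)).1.sum = l.1.sum + 1 := by
  obtain ⟨_ | ⟨i, l⟩, h⟩ := l
  · simp at h
  · simp [blockListSuccEquiv]
    ring

@[simps apply_coe]
def runVertexOneEquiv : Bool ≃ RunVertex 1 where
  toFun b := ⟨fun _ => b, by cases b; exacts [.zero (.zero (.zero .nil)), .block 1 le_rfl .nil]⟩
  invFun v := v.1 0
  left_inv _ := rfl
  right_inv v := Subtype.ext (funext fun i => by rw [Subsingleton.elim i 0])

lemma wt_runVertexEquivBlockList_symm {n : ℕ} (l : BlockList (n + 2)) :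
    wt ((runVertexEquivBlockList n).symm l) = l.1.sum := by
  rw [← sum_runVertexEquivBlockList, Equiv.apply_symm_apply]

section RankPolynomial

variable (R : Type*) [CommSemiring R]

noncomputable def rankPolynomial (n : ℕ) : R[X] := ∑ v : RunVertex n, X ^ wt v

lemma rankPolynomial_zero : rankPolynomial R 0 = 1 := by
  have : Unique (RunVertex 0) :=
    ⟨⟨⟨Fin.elim0, .zero (.zero .nil)⟩⟩, fun v => Subtype.ext (Subsingleton.elim _ _)⟩
  simp [rankPolynomial, wt]

lemma rankPolynomial_one : rankPolynomial R 1 = 1 + X := by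
  rw [rankPolynomial, ← runVertexOneEquiv.sum_comp, Fintype.sum_bool]
  have hwt (b : Bool) : wt (runVertexOneEquiv b) = b.toNat := by
    cases b <;> simp [wt]
  simp [hwt, add_comm]

lemma rankPolynomial_add_two (n : ℕ) :
    rankPolynomial R (n + 2) = rankPolynomial R (n + 1) + X * rankPolynomial R n := by
  let e : RunVertex (n + 1) ⊕ RunVertex n ≃ RunVertex (n + 2) :=
    (Equiv.sumCongr (runVertexEquivBlockList _) (runVertexEquivBlockList _)).trans
      ((blockListSuccEquiv (n + 1)).trans (runVertexEquivBlockList _).symm)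
  rw [rankPolynomial, ← e.sum_comp, Fintype.sum_sum_type, rankPolynomial, rankPolynomial, mul_sum]
  congr 1 <;> refine sum_congr rfl fun v _ => ?_
  · simp only [e, Equiv.trans_apply, Equiv.sumCongr_apply, Sum.map_inl,
      wt_runVertexEquivBlockList_symm, sum_blockListSuccEquiv_inl, sum_runVertexEquivBlockList]
  · simp only [e, Equiv.trans_apply, Equiv.sumCongr_apply, Sum.map_inr,
      wt_runVertexEquivBlockList_symm, sum_blockListSuccEquiv_inr, sum_runVertexEquivBlockList,
      pow_succ']

noncomputable def antidiagonalChoosePoly (n : ℕ) : R[X] :=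
  ∑ p ∈ antidiagonal n, (p.1.choose p.2 : R[X]) * X ^ p.2

lemma antidiagonalChoosePoly_add_two (n : ℕ) : antidiagonalChoosePoly R (n + 2) =
    antidiagonalChoosePoly R (n + 1) + X * antidiagonalChoosePoly R n := by
  simp only [antidiagonalChoosePoly]
  rw [Nat.antidiagonal_succ_succ', Nat.antidiagonal_succ']
  simp [Nat.choose_succ_succ, sum_add_distrib, add_mul, mul_sum, pow_succ, mul_comm, mul_left_comm]
  abel

lemma antidiagonalChoosePoly_succ (n : ℕ) : antidiagonalChoosePoly R (n + 1) =
    ∑ k ∈ range ((n + 1) / 2 + 1), ((n - k + 1).choose k : R[X]) * X ^ k := by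
  rw [antidiagonalChoosePoly, ← Nat.sum_antidiagonal_swap,
    Nat.sum_antidiagonal_eq_sum_range_succ_mk]
  symm
  apply sum_subset_zero_on_sdiff
  · exact range_subset_range.2 (by omega)
  · intro k hk
    simp only [mem_sdiff, mem_range] at hk
    simp [Nat.choose_eq_zero_of_lt (show n + 1 - k < k by omega)]
  · intro k hk
    simp only [mem_range] at hk
    simp [show n - k + 1 = n + 1 - k by omega]

lemma rankPolynomial_eq_antidiagonalChoosePoly (n : ℕ) :
    rankPolynomial R n = antidiagonalChoosePoly R (n + 1) := by
  induction n using Nat.twoStepInduction with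
  | zero => simp [rankPolynomial_zero, antidiagonalChoosePoly_succ]
  | one => simp [rankPolynomial_one, antidiagonalChoosePoly_succ, sum_range_succ]
  | more n h₀ h₁ =>
    rw [rankPolynomial_add_two, h₀, h₁, antidiagonalChoosePoly_add_two R (n + 1)]

end RankPolynomial

theorem PowerSeries.mk_mul_one_sub_X_sub_C_mul_X_sq {R : Type*} [CommRing R] {a : R} {f : ℕ → R}
    (hf : ∀ n, f (n + 2) = f (n + 1) + a * f n) :
    PowerSeries.mk f * (1 - PowerSeries.X - PowerSeries.C a * PowerSeries.X ^ 2) =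
      PowerSeries.C (f 0) + PowerSeries.C (f 1 - f 0) * PowerSeries.X := by
  ext (_ | _ | n) <;> simp [mul_sub, ← mul_assoc, PowerSeries.coeff_mul_X_pow', hf]
  ring

open Polynomial PowerSeries in
/-- The rank generating polynomial of the poset `R_n` is
`F(R_n,x) = Σ_{k=0}^{⌈n/2⌉} C(n-k+1,k) xᵏ`, and
`Σ_{n≥1} F(R_n,x) tⁿ = t(1+x+xt)/(1-t-xt²)` as a formal power series
(the latter stated multiplied through by the unit `1-t-xt²`). -/
theorem rank_generating_polynomial :
    (∀ n : ℕ, (∑ v : RunVertex n, (Polynomial.X : Polynomial ℤ) ^ wt v) =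
      ∑ k ∈ Finset.range ((n + 1) / 2 + 1),
        ((n - k + 1).choose k : Polynomial ℤ) * Polynomial.X ^ k) ∧
    (PowerSeries.mk fun n =>
        if n = 0 then 0
        else ∑ v : RunVertex n, (Polynomial.X : Polynomial ℤ) ^ wt v) *
        (1 - PowerSeries.X -
          PowerSeries.C (R := Polynomial ℤ) Polynomial.X * PowerSeries.X ^ 2) =
      PowerSeries.X * PowerSeries.C (R := Polynomial ℤ) (1 + Polynomial.X) +
        PowerSeries.C (R := Polynomial ℤ) Polynomial.X * PowerSeries.X ^ 2 := by
  refine ⟨fun n => (rankPolynomial_eq_antidiagonalChoosePoly ℤ n).trans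
    (antidiagonalChoosePoly_succ ℤ n), ?_⟩
  have hshift : (PowerSeries.mk fun n => if n = 0 then 0 else rankPolynomial ℤ n) =
      PowerSeries.X * PowerSeries.mk fun n => rankPolynomial ℤ (n + 1) := by
    ext (_ | n) <;> simp [coeff_succ_X_mul]
  change (PowerSeries.mk fun n => if n = 0 then 0 else rankPolynomial ℤ n) * _ = _
  rw [hshift, mul_assoc,
    PowerSeries.mk_mul_one_sub_X_sub_C_mul_X_sq fun n => rankPolynomial_add_two ℤ (n + 1),
    rankPolynomial_add_two ℤ 0, rankPolynomial_zero, rankPolynomial_one]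
  simp only [mul_one, add_sub_cancel_left]
  ring
end

section
/- The encoding that maps a binary string w of length n with run decomposition w = 0^{j_0} 1^{i_1} 0^{j_1} ··· 1^{i_k} 0^{j_k} to the string 0 s_{j_0} s_{i_1} s_{j_1} ··· s_{i_k} s_{j_k} (if j_0 > 0) or s_{i_1} s_{j_1} ··· s_{i_k} s_{j_k} (if j_0 = 0), where s_i = 1^i 0^{i+1}, padded with trailing zeros to total length 3n+1, is an injective map from {0,1}^n into the set of run-constrained binary strings of length 3n+1. -/
/-- The (maximal) runs of a binary string, in order. -/
def runs : List Bool → List (List Bool)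
  | [] => []
  | x :: xs =>
    match runs xs with
    | [] => [[x]]
    | r :: rs => if r.head? = some x then (x :: r) :: rs else [x] :: r :: rs

/-- The word `s_i = 1^i 0^{i+1}`. -/
def sWord (i : ℕ) : List Bool :=
  List.replicate i true ++ List.replicate (i + 1) false

/-- The run encoding before zero-padding: a binary string
`w = 0^{j₀} 1^{i₁} 0^{j₁} ⋯ 1^{i_k} 0^{j_k}` is mapped to
`0 s_{j₀} s_{i₁} s_{j₁} ⋯ s_{i_k} s_{j_k}` if `j₀ > 0` (i.e. `w` starts
with 0), and to `s_{i₁} s_{j₁} ⋯ s_{i_k} s_{j_k}` if `j₀ = 0`. -/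
def encodePre (w : List Bool) : List Bool :=
  (if w.head? = some false then [false] else []) ++
    ((runs w).map fun r => sWord r.length).flatten

/-- The run encoding, padded with trailing zeros to total length `3n+1`. -/
def encode (n : ℕ) (w : Fin n → Bool) : List Bool :=
  encodePre (List.ofFn w) ++
    List.replicate (3 * n + 1 - (encodePre (List.ofFn w)).length) false

/-! Since `s_0 = 0`, the padded code of `w` is `s_{ℓ₁} s_{ℓ₂} ⋯ s_{ℓ_m} s_0 ⋯ s_0` where
`ℓ = (0, j₀, i₁, j₁, …)` if `j₀ > 0` and `ℓ = (i₁, j₁, …)` otherwise; in both cases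
`w = 1^{ℓ₁} 0^{ℓ₂} 1^{ℓ₃} ⋯`, and the padding only appends runs of length `0`. A concatenation
of words `s_i` is run-constrained and determines its list of indices (`s_i` is read off as
`i` ones followed by `i + 1` zeros), so the code determines `w`. As `w` has at most `n` runs,
the code before padding has length `2n + m ≤ 3n + 1`. -/

def sCode (L : List ℕ) : List Bool :=
  (L.map sWord).flatten

def ofRunLengths : Bool → List ℕ → List Bool
  | _, [] => []
  | c, k :: ks => List.replicate k c ++ ofRunLengths (!c) ks

def runLengths (w : List Bool) : List ℕ :=
  (runs w).map List.length

def codeLengths (w : List Bool) : List ℕ :=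
  (if w.head? = some false then [0] else []) ++ runLengths w

section sCode

@[simp] lemma sCode_nil : sCode [] = [] := rfl

@[simp] lemma sCode_cons (k : ℕ) (L : List ℕ) : sCode (k :: L) = sWord k ++ sCode L := rfl

lemma sCode_append (L L' : List ℕ) : sCode (L ++ L') = sCode L ++ sCode L' := by
  simp [sCode]

lemma sCode_replicate_zero (p : ℕ) : sCode (List.replicate p 0) = List.replicate p false := by
  induction p with
  | zero => rfl
  | succ p ih => simp [List.replicate_succ, ih, sWord]

lemma length_sCode (L : List ℕ) : (sCode L).length = 2 * L.sum + L.length := by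
  induction L with
  | nil => rfl
  | cons k L ih => simp [ih, sWord]; ring

lemma takeWhile_sWord_append (k : ℕ) (X : List Bool) :
    (sWord k ++ X).takeWhile (· = true) = List.replicate k true := by
  simp [sWord, List.replicate_succ]

lemma sWord_append_inj {k k' : ℕ} {X X' : List Bool} (h : sWord k ++ X = sWord k' ++ X') :
    k = k' ∧ X = X' := by
  have hk : k = k' := by
    have := congrArg (fun l => (l.takeWhile (· = true)).length) h
    simpa only [takeWhile_sWord_append, List.length_replicate] using this
  subst hk
  exact ⟨rfl, List.append_cancel_left h⟩

lemma sCode_injective : Function.Injective sCode := by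
  intro L
  induction L with
  | nil =>
    rintro (_ | ⟨k', L'⟩) h
    · rfl
    · simp [sWord] at h
  | cons k L ih =>
    rintro (_ | ⟨k', L'⟩) h
    · simp [sWord] at h
    · obtain ⟨rfl, hL⟩ := sWord_append_inj h
      rw [ih hL]

lemma runConstrained_sCode (L : List ℕ) : RunConstrained (sCode L) := by
  induction L with
  | nil => exact .nil
  | cons k L ih =>
    rcases Nat.eq_zero_or_pos k with rfl | hk
    · exact .zero ih
    · exact .block k hk ih

end sCode

section ofRunLengths

@[simp] lemma ofRunLengths_nil (c : Bool) : ofRunLengths c [] = [] := rfl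

@[simp] lemma ofRunLengths_cons (c : Bool) (k : ℕ) (ks : List ℕ) :
    ofRunLengths c (k :: ks) = List.replicate k c ++ ofRunLengths (!c) ks := rfl

lemma ofRunLengths_succ_cons (c : Bool) (k : ℕ) (ks : List ℕ) :
    ofRunLengths c ((k + 1) :: ks) = c :: ofRunLengths c (k :: ks) := by
  simp [List.replicate_succ]

lemma ofRunLengths_replicate_zero (c : Bool) (p : ℕ) :
    ofRunLengths c (List.replicate p 0) = [] := by
  induction p generalizing c with
  | zero => rfl
  | succ p ih => simp [List.replicate_succ, ih]

lemma ofRunLengths_append_replicate_zero (c : Bool) (L : List ℕ) (p : ℕ) :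
    ofRunLengths c (L ++ List.replicate p 0) = ofRunLengths c L := by
  induction L generalizing c with
  | nil => simp [ofRunLengths_replicate_zero]
  | cons k L ih => simp [ih]

lemma length_ofRunLengths (c : Bool) (L : List ℕ) : (ofRunLengths c L).length = L.sum := by
  induction L generalizing c with
  | nil => rfl
  | cons k L ih => simp [ih]

end ofRunLengths

section runs

lemma exists_runs_cons (x : Bool) (xs : List Bool) : ∃ r rs, runs (x :: xs) = (x :: r) :: rs := by
  unfold runs
  split
  · exact ⟨[], [], rfl⟩
  · split <;> exact ⟨_, _, rfl⟩

lemma runs_cons_cons {x y : Bool} {ys r : List Bool} {rs : List (List Bool)}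
    (h : runs (y :: ys) = (y :: r) :: rs) :
    runs (x :: y :: ys) = if y = x then (x :: y :: r) :: rs else [x] :: (y :: r) :: rs := by
  rw [runs, h]
  simp

lemma length_runs_le (w : List Bool) : (runs w).length ≤ w.length := by
  induction w with
  | nil => exact le_rfl
  | cons x xs ih =>
    rcases h : runs xs with _ | ⟨r, rs⟩
    · simp [runs, h]
    · rw [h] at ih
      simp only [runs, h]
      split <;> simp only [List.length_cons] at ih ⊢ <;> omega

lemma ofRunLengths_runLengths (x : Bool) (xs : List Bool) :
    ofRunLengths x (runLengths (x :: xs)) = x :: xs := by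
  induction xs generalizing x with
  | nil => rfl
  | cons y ys ih =>
    obtain ⟨r, rs, h⟩ := exists_runs_cons y ys
    have ih' : ofRunLengths y ((r.length + 1) :: rs.map List.length) = y :: ys := by
      simpa [runLengths, h] using ih y
    by_cases hyx : y = x
    · subst hyx
      simp only [runLengths, runs_cons_cons h, if_true, List.map_cons, List.length_cons]
      rw [ofRunLengths_succ_cons, ih']
    · have hxy : (!x) = y := by cases x <;> cases y <;> simp_all
      simp only [runLengths, runs_cons_cons h, hyx, if_false, List.map_cons, List.length_cons,
        ofRunLengths_cons, hxy, ih']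
      rfl

lemma ofRunLengths_codeLengths (w : List Bool) : ofRunLengths true (codeLengths w) = w := by
  rcases w with _ | ⟨_ | _, xs⟩
  · rfl
  · simpa [codeLengths] using ofRunLengths_runLengths false xs
  · simpa [codeLengths] using ofRunLengths_runLengths true xs

lemma sum_codeLengths (w : List Bool) : (codeLengths w).sum = w.length := by
  conv_rhs => rw [← ofRunLengths_codeLengths w]
  rw [length_ofRunLengths]

lemma length_codeLengths_le (w : List Bool) : (codeLengths w).length ≤ w.length + 1 := by
  have h := length_runs_le w
  unfold codeLengths runLengths
  split <;> simp <;> omega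

end runs

lemma encodePre_eq_sCode (w : List Bool) : encodePre w = sCode (codeLengths w) := by
  unfold encodePre codeLengths runLengths sCode
  split <;> simp [List.map_map, Function.comp_def, sWord]

lemma encodePre_append_replicate (w : List Bool) (p : ℕ) :
    encodePre w ++ List.replicate p false = sCode (codeLengths w ++ List.replicate p 0) := by
  rw [sCode_append, sCode_replicate_zero, encodePre_eq_sCode]

lemma length_encodePre_le (w : List Bool) : (encodePre w).length ≤ 3 * w.length + 1 := by
  rw [encodePre_eq_sCode, length_sCode, sum_codeLengths]
  linarith [length_codeLengths_le w]

/-- The run encoding is an injective map from `{0,1}ⁿ` into the set of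
run-constrained binary strings of length `3n+1`. -/
theorem encode_injective (n : ℕ) :
    Function.Injective (encode n) ∧
      ∀ w : Fin n → Bool,
        RunConstrained (encode n w) ∧ (encode n w).length = 3 * n + 1 := by
  refine ⟨fun u v h => ?_, fun w => ⟨?_, ?_⟩⟩
  · simp only [encode, encodePre_append_replicate] at h
    have h' := congrArg (ofRunLengths true) (sCode_injective h)
    simp only [ofRunLengths_append_replicate_zero, ofRunLengths_codeLengths] at h'
    exact List.ofFn_injective h'
  · rw [encode, encodePre_append_replicate]
    exact runConstrained_sCode _
  · have h := length_encodePre_le (List.ofFn w)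
    rw [List.length_ofFn] at h
    rw [encode, List.length_append, List.length_replicate]
    omega
end
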